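/- For any connected graph G, γ(G) ≤ l°(G), where l°(G) = min over odd cycles C of G of (2·max_{x ∈ V(G∖C)} d_G(x,C) + |V(C)| − 1), and l°(G) = ∞ if G is bipartite. -/
import Mathlib


/-- Existence of a walk of length `k` from `x` to `y` in the graph with adjacency
relation `adj` (loops allowed, no parallel edges). -/
def GWalk {V : Type*} (adj : V → V → Prop) : ℕ → V → V → Prop
  | 0, x, y => x = y
  | k + 1, x, y => ∃ z, adj x z ∧ GWalk adj k z y

/-- Distance: the length of a shortest walk (= shortest path) from `x` to `y`. -/
noncomputable def GDist {V : Type*} (adj : V → V → Prop) (x y : V) : ℕ :=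
  sInf {k | GWalk adj k x y}

/-- The graph is connected: any two vertices are joined by some walk. -/
def GConnected {V : Type*} (adj : V → V → Prop) : Prop :=
  ∀ x y, ∃ k, GWalk adj k x y

/-- The graph contains a closed walk of odd length (an "odd cycle"). -/
def HasOddClosedWalk {V : Type*} (adj : V → V → Prop) : Prop :=
  ∃ (x : V) (k : ℕ), Odd k ∧ GWalk adj k x x

/-- The graph is primitive: some `γ` works as an exponent. -/
def GPrimitive {V : Type*} (adj : V → V → Prop) : Prop :=
  ∃ γ : ℕ, ∀ x y : V, ∀ k ≥ γ, GWalk adj k x y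

/-- Adjacency of the Kronecker (tensor) product. -/
def KronAdj {V₁ V₂ : Type*} (adj₁ : V₁ → V₁ → Prop) (adj₂ : V₂ → V₂ → Prop) :
    V₁ × V₂ → V₁ × V₂ → Prop :=
  fun a b => adj₁ a.1 b.1 ∧ adj₂ a.2 b.2

/-- The exponent of a graph, as an extended natural number (`⊤` if not primitive). -/
noncomputable def GExp {V : Type*} (adj : V → V → Prop) : ℕ∞ :=
  sInf {n : ℕ∞ | ∃ γ : ℕ, n = γ ∧ ∀ x y : V, ∀ k ≥ γ, GWalk adj k x y}

/-- The quantity `l°(G)`: the minimum over odd cycles `C` of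
`2·max_{x ∉ C} d_G(x,C) + |V(C)| − 1`, and `⊤` if there is no odd cycle. -/
noncomputable def Glo {V : Type*} (adj : V → V → Prop) : ℕ∞ :=
  sInf {n : ℕ∞ | ∃ (c : ℕ) (f : ZMod c → V), Odd c ∧ Function.Injective f ∧
    (∀ i, adj (f i) (f (i + 1))) ∧
    n = (2 * sSup {m : ℕ | ∃ x : V, (∀ i, x ≠ f i) ∧
          m = sInf {k : ℕ | ∃ i, GWalk adj k x (f i)}} + c - 1 : ℕ)}


section Aux

variable {V : Type*} {adj : V → V → Prop}

theorem gwalk_append : ∀ (a : ℕ) {b : ℕ} {x z y : V},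
    GWalk adj a x z → GWalk adj b z y → GWalk adj (a + b) x y := by
  intro a
  induction a with
  | zero =>
    intro b x z y h1 h2
    have hxz : x = z := h1
    rw [Nat.zero_add, hxz]; exact h2
  | succ n ih =>
    intro b x z y h1 h2
    obtain ⟨w, hw, h1'⟩ := h1
    have h : n + 1 + b = (n + b) + 1 := by omega
    rw [h]
    exact ⟨w, hw, ih h1' h2⟩

theorem gwalk_reverse (hs : Symmetric adj) : ∀ (k : ℕ) {x y : V},
    GWalk adj k x y → GWalk adj k y x := by
  intro k
  induction k with
  | zero => intro x y h; exact (h : x = y).symm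
  | succ n ih =>
    intro x y h
    obtain ⟨z, hz, h'⟩ := h
    exact gwalk_append n (ih h') ⟨x, hs hz, rfl⟩

theorem gwalk_fwd {c : ℕ} (f : ZMod c → V) (hadj : ∀ i, adj (f i) (f (i + 1))) :
    ∀ (r : ℕ) (i : ZMod c), GWalk adj r (f i) (f (i + (r : ZMod c))) := by
  intro r
  induction r with
  | zero => intro i; show f i = f (i + ((0 : ℕ) : ZMod c)); norm_num
  | succ n ih =>
    intro i
    refine ⟨f (i + 1), hadj i, ?_⟩
    have h : i + (((n + 1 : ℕ)) : ZMod c) = (i + 1) + ((n : ℕ) : ZMod c) := by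
      push_cast; ring
    rw [h]
    exact ih (i + 1)

theorem gwalk_bwd (hs : Symmetric adj) {c : ℕ} (f : ZMod c → V)
    (hadj : ∀ i, adj (f i) (f (i + 1))) :
    ∀ (r : ℕ) (i : ZMod c), GWalk adj r (f i) (f (i - (r : ZMod c))) := by
  intro r
  induction r with
  | zero => intro i; show f i = f (i - ((0 : ℕ) : ZMod c)); norm_num
  | succ n ih =>
    intro i
    have hadj' : adj (f i) (f (i - 1)) := by
      have := hadj (i - 1)
      rw [sub_add_cancel] at this
      exact hs this
    refine ⟨f (i - 1), hadj', ?_⟩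
    have h : i - (((n + 1 : ℕ)) : ZMod c) = (i - 1) - ((n : ℕ) : ZMod c) := by
      push_cast; ring
    rw [h]
    exact ih (i - 1)

theorem gwalk_evenloop (hs : Symmetric adj) {c : ℕ} (f : ZMod c → V)
    (hadj : ∀ i, adj (f i) (f (i + 1))) :
    ∀ (a : ℕ) (i : ZMod c), GWalk adj (2 * a) (f i) (f i) := by
  intro a
  induction a with
  | zero => intro i; exact rfl
  | succ n ih =>
    intro i
    have h : 2 * (n + 1) = (2 * n + 1) + 1 := by ring
    rw [h]
    exact ⟨f (i + 1), hadj i, f i, hs (hadj i), ih i⟩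

theorem gwalk_reach (hs : Symmetric adj) {c : ℕ} [NeZero c] (f : ZMod c → V)
    (hodd : Odd c) (hadj : ∀ i, adj (f i) (f (i + 1))) (i j : ZMod c) (M : ℕ)
    (hM : c - 1 ≤ M) : GWalk adj M (f i) (f j) := by
  set r0 := (j - i).val with hr0def
  have hr0 : r0 < c := ZMod.val_lt _
  have hcast : ((r0 : ℕ) : ZMod c) = j - i := ZMod.natCast_rightInverse (j - i)
  have hc2 : c % 2 = 1 := Nat.odd_iff.mp hodd
  by_cases hp : M % 2 = r0 % 2
  · have h1 : 2 * ((M - r0) / 2) + r0 = M := by omega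
    have w := gwalk_append _ (gwalk_evenloop hs f hadj ((M - r0) / 2) i)
      (gwalk_fwd f hadj r0 i)
    rw [h1] at w
    have hj : i + ((r0 : ℕ) : ZMod c) = j := by rw [hcast]; ring
    rwa [hj] at w
  · have h1 : 2 * ((M - (c - r0)) / 2) + (c - r0) = M := by omega
    have w := gwalk_append _ (gwalk_evenloop hs f hadj ((M - (c - r0)) / 2) i)
      (gwalk_bwd hs f hadj (c - r0) i)
    rw [h1] at w
    have hj : i - (((c - r0 : ℕ)) : ZMod c) = j := by
      rw [Nat.cast_sub hr0.le, ZMod.natCast_self, hcast]; ring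
    rwa [hj] at w

end Aux

theorem stmt9 {V : Type*} [Fintype V] [Nonempty V] (adj : V → V → Prop)
    (hsymm : Symmetric adj) (hconn : GConnected adj) :
    GExp adj ≤ Glo adj := by
  refine le_sInf ?_
  rintro b ⟨c, f, hodd, hinj, hadj, rfl⟩
  haveI : NeZero c := ⟨hodd.pos.ne'⟩
  set s := sSup {m : ℕ | ∃ x : V, (∀ i, x ≠ f i) ∧
      m = sInf {k : ℕ | ∃ i, GWalk adj k x (f i)}} with hs
  have hc2 : c % 2 = 1 := Nat.odd_iff.mp hodd
  have hnear : ∀ x : V, ∃ d ≤ s, ∃ i, GWalk adj d x (f i) := by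
    intro x
    by_cases hx : ∃ i, x = f i
    · obtain ⟨i, rfl⟩ := hx
      exact ⟨0, Nat.zero_le _, i, rfl⟩
    · push_neg at hx
      have hne : {k : ℕ | ∃ i, GWalk adj k x (f i)}.Nonempty := by
        obtain ⟨k, hk⟩ := hconn x (f 0); exact ⟨k, 0, hk⟩
      have hmem := Nat.sInf_mem hne
      obtain ⟨i, hi⟩ := hmem
      refine ⟨_, ?_, i, hi⟩
      refine le_csSup ?_ ⟨x, hx, rfl⟩
      have hsub : {m : ℕ | ∃ x : V, (∀ i, x ≠ f i) ∧
          m = sInf {k : ℕ | ∃ i, GWalk adj k x (f i)}} ⊆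
          Set.range (fun x : V => sInf {k : ℕ | ∃ i, GWalk adj k x (f i)}) := by
        rintro m ⟨x, -, rfl⟩; exact ⟨x, rfl⟩
      exact ((Set.finite_range _).subset hsub).bddAbove
  refine sInf_le ⟨2 * s + c - 1, rfl, ?_⟩
  intro x y k hk
  obtain ⟨dx, hdx, i, wx⟩ := hnear x
  obtain ⟨dy, hdy, j, wy⟩ := hnear y
  have wy' := gwalk_reverse hsymm _ wy
  have hM : c - 1 ≤ k - dx - dy := by omega
  have wmid := gwalk_reach hsymm f hodd hadj i j (k - dx - dy) hM
  have w := gwalk_append _ wx (gwalk_append _ wmid wy')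
  have hk' : dx + (k - dx - dy + dy) = k := by omega
  rwa [hk'] at w
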